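/- arXiv:1412.8097 — 2 statements merged into one kernel-verified Lean document; each statement's English description precedes it below -/
import Mathlib

section
/- If G = (V,E) is a directed acyclic graph and G~ = (V,E~) is a minimum equivalent digraph of G (a reachability-equivalent subgraph with the fewest edges), then E~ is exactly the set of edges (u,v) in E such that there is no directed path from u to v in G avoiding the edge (u,v). -/
/-!
An edge of a minimum equivalent digraph can never be bypassed inside it: otherwise deleting
it keeps reachability and lowers the edge count. Conversely, an edge `e = (u, v)` of `G` that
cannot be bypassed in `G` must lie in every equivalent subgraph. The point is that in a DAG
a bypass of `e` in `G` yields one in `G~`: take the first edge `(u, w) ≠ e` of the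
bypass; the `G~`-paths from `u` to `w` and from `w` to `v` cannot use `e`, since that would
close a cycle.
-/

/-- Reachability in a digraph given by an edge finset. -/
def Reach {V : Type*} [DecidableEq V] (E : Finset (V × V)) (u v : V) : Prop :=
  Relation.ReflTransGen (fun a b => (a, b) ∈ E) u v

namespace Reach

variable {V : Type*} [DecidableEq V] {E F : Finset (V × V)} {e : V × V} {a b : V}

theorem mono (hEF : E ⊆ F) (h : Reach E a b) : Reach F a b :=
  Relation.ReflTransGen.mono (fun _ _ hxy => hEF hxy) _ _ h

theorem single (h : (a, b) ∈ E) : Reach E a b :=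
  Relation.ReflTransGen.single h

theorem antisymm_of_acyclic (hacyclic : ∀ u v : V, (u, v) ∈ E → ¬ Reach E v u)
    (hab : Reach E a b) (hba : Reach E b a) : a = b := by
  rcases hab.cases_head with rfl | ⟨c, hac, hcb⟩
  · rfl
  · exact absurd (hcb.trans hba) (hacyclic a c hac)

theorem through_of_not_reach_erase (h : Reach E a b) (hn : ¬ Reach (E.erase e) a b) :
    Reach E a e.1 ∧ Reach E e.2 b := by
  induction h using Relation.ReflTransGen.head_induction_on with
  | refl => exact absurd Relation.ReflTransGen.refl hn
  | @head x c hxc hcb ih =>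
    by_cases hx : (x, c) = e
    · subst hx
      exact ⟨Relation.ReflTransGen.refl, hcb⟩
    · have hcb' : ¬ Reach (E.erase e) c b := fun hcb' =>
        hn (Relation.ReflTransGen.head (Finset.mem_erase.mpr ⟨hx, hxc⟩) hcb')
      obtain ⟨hce, heb⟩ := ih hcb'
      exact ⟨Relation.ReflTransGen.head hxc hce, heb⟩

theorem erase_iff_of_bypass (hbypass : Reach (E.erase e) e.1 e.2) :
    Reach (E.erase e) a b ↔ Reach E a b := by
  refine ⟨mono (Finset.erase_subset e E), fun h => ?_⟩
  induction h using Relation.ReflTransGen.head_induction_on with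
  | refl => exact Relation.ReflTransGen.refl
  | @head x c hxc _ ih =>
    by_cases hx : (x, c) = e
    · subst hx
      exact hbypass.trans ih
    · exact Relation.ReflTransGen.head (Finset.mem_erase.mpr ⟨hx, hxc⟩) ih

end Reach

theorem reach_erase_of_equiv_of_acyclic {V : Type*} [DecidableEq V] {E Et : Finset (V × V)}
    (hacyclic : ∀ u v : V, (u, v) ∈ E → ¬ Reach E v u)
    (hequiv : ∀ u v : V, Reach Et u v ↔ Reach E u v) {e : V × V}
    (hbypass : Reach (E.erase e) e.1 e.2) : Reach (Et.erase e) e.1 e.2 := by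
  rcases hbypass.cases_head with heq | ⟨w, hw, hwv⟩
  · rw [heq]
    exact Relation.ReflTransGen.refl
  obtain ⟨hwe, hwE⟩ := Finset.mem_erase.mp hw
  have hwvE : Reach E w e.2 := Reach.mono (Finset.erase_subset e E) hwv
  have huw : Reach (Et.erase e) e.1 w := by
    by_contra hn
    obtain ⟨-, hvw⟩ := ((hequiv _ _).2 (Reach.single hwE)).through_of_not_reach_erase hn
    exact hwe (Prod.ext rfl (Reach.antisymm_of_acyclic hacyclic hwvE ((hequiv _ _).1 hvw)))
  have hwv : Reach (Et.erase e) w e.2 := by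
    by_contra hn
    obtain ⟨hwu, -⟩ := ((hequiv _ _).2 hwvE).through_of_not_reach_erase hn
    exact hacyclic _ _ hwE ((hequiv _ _).1 hwu)
  exact huw.trans hwv

theorem stmt0_general {V : Type*} [DecidableEq V] (E Et : Finset (V × V))
    (hacyclic : ∀ u v : V, (u, v) ∈ E → ¬ Reach E v u)
    (hsub : Et ⊆ E)
    (hequiv : ∀ u v : V, Reach Et u v ↔ Reach E u v)
    (hmin : ∀ F : Finset (V × V), F ⊆ E → (∀ u v : V, Reach F u v ↔ Reach E u v) →
      Et.card ≤ F.card) :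
    ∀ e : V × V, e ∈ Et ↔ e ∈ E ∧ ¬ Reach (E.erase e) e.1 e.2 := by
  intro e
  constructor
  · intro he
    refine ⟨hsub he, fun hbypass => ?_⟩
    have hbypassEt := reach_erase_of_equiv_of_acyclic hacyclic hequiv hbypass
    have hcard := hmin (Et.erase e) ((Et.erase_subset e).trans hsub) fun u v =>
      (Reach.erase_iff_of_bypass hbypassEt).trans (hequiv u v)
    exact (Finset.card_erase_lt_of_mem he).not_ge hcard
  · rintro ⟨heE, hnot⟩
    by_contra he
    exact hnot (((hequiv _ _).2 (Reach.single heE)).mono (Finset.subset_erase.2 ⟨hsub, he⟩))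

/-- In a DAG, a minimum equivalent digraph consists exactly of the edges `(u,v) ∈ E`
such that there is no directed path from `u` to `v` avoiding the edge `(u,v)`. -/
theorem stmt0 {V : Type*} [Fintype V] [DecidableEq V] (E Et : Finset (V × V))
    (hacyclic : ∀ u v : V, (u, v) ∈ E → ¬ Reach E v u)
    (hsub : Et ⊆ E)
    (hequiv : ∀ u v : V, Reach Et u v ↔ Reach E u v)
    (hmin : ∀ F : Finset (V × V), F ⊆ E → (∀ u v : V, Reach F u v ↔ Reach E u v) →
      Et.card ≤ F.card) :
    ∀ e : V × V, e ∈ Et ↔ e ∈ E ∧ ¬ Reach (E.erase e) e.1 e.2 :=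
  stmt0_general E Et hacyclic hsub hequiv hmin
end

section
/- Every digraph G with at least one edge and chain-length R admits a walk of length strictly less than n², where n is the number of vertices, that visits exactly R distinct vertices and visits each vertex at most R times. -/
/-!
Cutting a detour `v … v` out of a walk keeps it a walk, and keeps its vertex set when every
vertex strictly inside the detour is also visited outside it. So a shortest walk on the vertex
set of a walk visiting `R` vertices has no such detour: each of the detours between consecutive
visits of a vertex `v` then contains a vertex private to it, whence `v` is visited at most `R`
times and the walk has length at most `R² - 1 < n²`.
-/

/-- A (nonempty) walk in a digraph, given as the list of visited vertices. -/
def IsWalk {V : Type*} [DecidableEq V] (E : Finset (V × V)) (l : List V) : Prop :=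
  l ≠ [] ∧ l.Chain' (fun a b => (a, b) ∈ E)

section RemovableLoop

variable {V : Type*}

def HasRemovableLoop (v : V) (l : List V) : Prop :=
  ∃ a b d, l = a ++ v :: (b ++ v :: d) ∧ ∀ x ∈ b, x ∈ a ++ v :: d

theorem HasRemovableLoop.append_left {v : V} {l : List V} (a : List V)
    (h : HasRemovableLoop v l) : HasRemovableLoop v (a ++ l) := by
  obtain ⟨a', b, d, rfl, hb⟩ := h
  exact ⟨a ++ a', b, d, by simp, fun y hy => by simpa using Or.inr (hb y hy)⟩

variable [DecidableEq V]

theorem List.length_le_card_toFinset_mul {l : List V} {c : ℕ} (h : ∀ v, l.count v ≤ c) :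
    l.length ≤ l.toFinset.card * c := by
  rw [← sum_toFinset_count_eq_length]
  simpa using Finset.sum_le_sum fun v (_ : v ∈ l.toFinset) => h v

theorem count_le_card_toFinset_of_not_hasRemovableLoop {v : V} :
    ∀ {l : List V}, ¬HasRemovableLoop v l → l.count v ≤ l.toFinset.card
  | [], _ => by simp
  | x :: l, h => by
    by_cases hxv : x = v
    · subst hxv
      by_cases hl : x ∈ l
      · obtain ⟨b, d, rfl, hxb⟩ := List.eq_append_cons_of_mem hl
        obtain ⟨w, hwb, hwd⟩ : ∃ w ∈ b, w ∉ x :: d := by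
          by_contra! hall
          exact h ⟨[], b, d, rfl, hall⟩
        have ih := count_le_card_toFinset_of_not_hasRemovableLoop
          (l := x :: d) fun hd => h (hd.append_left (x :: b))
        calc (x :: (b ++ x :: d)).count x = (x :: d).count x + 1 := by
              simp [List.count_append, List.count_eq_zero.2 hxb]
          _ ≤ (x :: d).toFinset.card + 1 := by omega
          _ = (insert w (x :: d).toFinset).card := by
              rw [Finset.card_insert_of_notMem (by simpa using hwd)]
          _ ≤ (x :: (b ++ x :: d)).toFinset.card := Finset.card_le_card (by
              intro y; simp only [Finset.mem_insert, List.mem_toFinset]; aesop)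
      · simp [List.count_eq_zero.2 hl]
    · have ih := count_le_card_toFinset_of_not_hasRemovableLoop fun hl => h (hl.append_left [x])
      calc (x :: l).count v = l.count v := List.count_cons_of_ne hxv
        _ ≤ l.toFinset.card := ih
        _ ≤ (x :: l).toFinset.card := Finset.card_le_card (by simp [Finset.subset_insert])
termination_by l => l.length
decreasing_by all_goals simp_all; try omega

end RemovableLoop

section Walk

variable {V : Type*} [DecidableEq V] {E : Finset (V × V)}

theorem IsWalk.cut_loop {a b d : List V} {v : V} (h : IsWalk E (a ++ v :: (b ++ v :: d))) :
    IsWalk E (a ++ v :: d) := by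
  obtain ⟨-, hchain⟩ := h
  refine ⟨by simp, ?_⟩
  rw [List.Chain', List.isChain_append] at hchain ⊢
  obtain ⟨ha, hloop, hjoin⟩ := hchain
  rw [← List.cons_append, List.isChain_append] at hloop
  exact ⟨ha, hloop.2.1, by simpa using hjoin⟩

theorem HasRemovableLoop.exists_shorter_walk {l : List V} {v : V} (hl : IsWalk E l)
    (h : HasRemovableLoop v l) :
    ∃ l', IsWalk E l' ∧ l'.toFinset = l.toFinset ∧ l'.length < l.length := by
  obtain ⟨a, b, d, rfl, hb⟩ := h
  refine ⟨a ++ v :: d, hl.cut_loop, ?_, by simp⟩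
  ext x
  have := hb x
  simp only [List.mem_toFinset, List.mem_append, List.mem_cons] at this ⊢
  tauto

theorem IsWalk.exists_count_le_card_toFinset {l : List V} (hl : IsWalk E l) :
    ∃ l', IsWalk E l' ∧ l'.toFinset = l.toFinset ∧ ∀ v, l'.count v ≤ l.toFinset.card := by
  induction h : l.length using Nat.strong_induction_on generalizing l with
  | _ n ih =>
  by_cases hcount : ∀ v, l.count v ≤ l.toFinset.card
  · exact ⟨l, hl, rfl, hcount⟩
  obtain ⟨v, hv⟩ := not_forall.1 hcount
  have hloop : HasRemovableLoop v l := by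
    by_contra hno
    exact hv (count_le_card_toFinset_of_not_hasRemovableLoop hno)
  obtain ⟨l₁, hl₁, hset₁, hlen₁⟩ := hloop.exists_shorter_walk hl
  obtain ⟨l₂, hl₂, hset₂, hcount₂⟩ := ih _ (h ▸ hlen₁) hl₁ rfl
  exact ⟨l₂, hl₂, hset₂.trans hset₁, hset₁ ▸ hcount₂⟩

end Walk

theorem stmt7_general {V : Type*} [Fintype V] [DecidableEq V] (E : Finset (V × V)) (R : ℕ)
    (hR2 : ∃ l : List V, IsWalk E l ∧ l.toFinset.card = R) :
    ∃ l : List V, IsWalk E l ∧ l.length - 1 < (Fintype.card V) ^ 2 ∧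
      l.toFinset.card = R ∧ ∀ v : V, l.count v ≤ R := by
  obtain ⟨l₀, hl₀, rfl⟩ := hR2
  obtain ⟨l, hl, hset, hcount⟩ := hl₀.exists_count_le_card_toFinset
  have hlen : l.length ≤ l₀.toFinset.card ^ 2 := by
    simpa [hset, sq] using List.length_le_card_toFinset_mul hcount
  have hcard : l₀.toFinset.card ≤ Fintype.card V := Finset.card_le_univ _
  have hpos : 0 < l.length := List.length_pos_iff.2 hl.1
  refine ⟨l, hl, ?_, by rw [hset], hcount⟩
  have := Nat.pow_le_pow_left hcard 2
  omega

/-- A digraph with at least one edge and chain-length `R` admits a walk of length `< n²`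
visiting exactly `R` distinct vertices, each at most `R` times. -/
theorem stmt7 {V : Type*} [Fintype V] [DecidableEq V] (E : Finset (V × V)) (R : ℕ)
    (hE : E.Nonempty)
    (hR1 : ∀ l : List V, IsWalk E l → l.toFinset.card ≤ R)
    (hR2 : ∃ l : List V, IsWalk E l ∧ l.toFinset.card = R) :
    ∃ l : List V, IsWalk E l ∧ l.length - 1 < (Fintype.card V) ^ 2 ∧
      l.toFinset.card = R ∧ ∀ v : V, l.count v ≤ R :=
  stmt7_general E R hR2
end
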